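/- Let t¹, t² be orthonormal vectors in Euclidean three-space ℝ³, n = t¹ × t², m a unit vector, P_m v = v − ⟨v, m⟩ m, and set c = ‖P_m t¹ × P_m t²‖. Then 1 − c⟨n, m⟩ = ½(⟨t¹, m⟩² + ⟨t², m⟩²) + ½‖n − c m‖². -/

import Mathlib

/-!
By Lagrange's identity, `c² = ‖P_m t¹‖²‖P_m t²‖² − ⟨P_m t¹, P_m t²⟩² = 1 − ⟨t¹, m⟩² − ⟨t², m⟩²`
and `‖n‖ = 1`. Expanding `‖n − c m‖² = 1 − 2c⟨n, m⟩ + c²` and substituting `c²` gives the identity.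
-/

open scoped RealInnerProductSpace

/-- The cross product of two vectors in Euclidean three-space `ℝ³`. -/
noncomputable def cross3 (a b : EuclideanSpace ℝ (Fin 3)) : EuclideanSpace ℝ (Fin 3) :=
  (WithLp.equiv 2 (Fin 3 → ℝ)).symm
    ![a 1 * b 2 - a 2 * b 1, a 2 * b 0 - a 0 * b 2, a 0 * b 1 - a 1 * b 0]

/-- The orthogonal projection onto the plane orthogonal to `m`:
`P_m v = v - ⟪v, m⟫ • m`. -/
noncomputable def projPlane (m v : EuclideanSpace ℝ (Fin 3)) : EuclideanSpace ℝ (Fin 3) :=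
  v - ⟪v, m⟫ • m

open scoped Matrix

lemma cross3_eq_crossProduct (a b : EuclideanSpace ℝ (Fin 3)) :
    cross3 a b = WithLp.toLp 2 (a.ofLp ⨯₃ b.ofLp) :=
  rfl

lemma EuclideanSpace.real_inner_eq_dotProduct {n : Type*} [Fintype n]
    (a b : EuclideanSpace ℝ n) : ⟪a, b⟫ = a.ofLp ⬝ᵥ b.ofLp := by
  simp [EuclideanSpace.inner_eq_star_dotProduct, dotProduct_comm]

lemma norm_cross3_sq (u v : EuclideanSpace ℝ (Fin 3)) :
    ‖cross3 u v‖ ^ 2 = ‖u‖ ^ 2 * ‖v‖ ^ 2 - ⟪u, v⟫ ^ 2 := by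
  simp only [← real_inner_self_eq_norm_sq, EuclideanSpace.real_inner_eq_dotProduct,
    cross3_eq_crossProduct, cross_dot_cross, dotProduct_comm v.ofLp u.ofLp]
  ring

lemma norm_cross3_of_orthonormal {t1 t2 : EuclideanSpace ℝ (Fin 3)}
    (ht1 : ‖t1‖ = 1) (ht2 : ‖t2‖ = 1) (ht12 : ⟪t1, t2⟫ = 0) : ‖cross3 t1 t2‖ = 1 := by
  have h : ‖cross3 t1 t2‖ ^ 2 = 1 := by rw [norm_cross3_sq, ht1, ht2, ht12]; norm_num
  exact (pow_eq_one_iff_of_nonneg (norm_nonneg _) two_ne_zero).mp h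

lemma inner_projPlane_projPlane {m : EuclideanSpace ℝ (Fin 3)} (hm : ‖m‖ = 1)
    (v w : EuclideanSpace ℝ (Fin 3)) :
    ⟪projPlane m v, projPlane m w⟫ = ⟪v, w⟫ - ⟪v, m⟫ * ⟪w, m⟫ := by
  have hmm : ⟪m, m⟫ = 1 := by rw [real_inner_self_eq_norm_sq, hm, one_pow]
  simp only [projPlane, inner_sub_left, inner_sub_right, real_inner_smul_left,
    real_inner_smul_right, hmm, real_inner_comm w m]
  ring

lemma norm_cross3_projPlane_sq {t1 t2 m : EuclideanSpace ℝ (Fin 3)}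
    (ht1 : ‖t1‖ = 1) (ht2 : ‖t2‖ = 1) (ht12 : ⟪t1, t2⟫ = 0) (hm : ‖m‖ = 1) :
    ‖cross3 (projPlane m t1) (projPlane m t2)‖ ^ 2 = 1 - ⟪t1, m⟫ ^ 2 - ⟪t2, m⟫ ^ 2 := by
  rw [norm_cross3_sq]
  simp only [← real_inner_self_eq_norm_sq, inner_projPlane_projPlane hm]
  simp only [real_inner_self_eq_norm_sq, ht1, ht2, ht12]
  ring

/-- For orthonormal `t¹, t²` in `ℝ³` with induced unit normal `n = t¹ × t²`,
a unit vector `m`, `P_m v = v - ⟪v, m⟫ • m`, and `c = ‖P_m t¹ × P_m t²‖`, we have the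
exact identity `1 − c⟪n, m⟫ = ½(⟪t¹, m⟫² + ⟪t², m⟫²) + ½‖n − c • m‖²`. -/
theorem integration_element_identity
    (t1 t2 m : EuclideanSpace ℝ (Fin 3))
    (ht1 : ‖t1‖ = 1) (ht2 : ‖t2‖ = 1) (ht12 : ⟪t1, t2⟫ = 0) (hm : ‖m‖ = 1) :
    1 - ‖cross3 (projPlane m t1) (projPlane m t2)‖ * ⟪cross3 t1 t2, m⟫
      = (1 / 2) * (⟪t1, m⟫ ^ 2 + ⟪t2, m⟫ ^ 2)
        + (1 / 2) * ‖cross3 t1 t2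
            - ‖cross3 (projPlane m t1) (projPlane m t2)‖ • m‖ ^ 2 := by
  set c := ‖cross3 (projPlane m t1) (projPlane m t2)‖
  have hc : c ^ 2 = 1 - ⟪t1, m⟫ ^ 2 - ⟪t2, m⟫ ^ 2 := norm_cross3_projPlane_sq ht1 ht2 ht12 hm
  have hexpand : ‖cross3 t1 t2 - c • m‖ ^ 2 = 1 - 2 * c * ⟪cross3 t1 t2, m⟫ + c ^ 2 := by
    rw [norm_sub_sq_real, norm_cross3_of_orthonormal ht1 ht2 ht12, real_inner_smul_right,
      norm_smul, hm, Real.norm_eq_abs, mul_one, sq_abs]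
    ring
  rw [hexpand]
  linear_combination (-1 / 2 : ℝ) * hc
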